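/- Consider the two-piece convex knapsack problem (CK) with the additional assumptions that γ_j ≤ 0 and u_j ≤ Ω for every j ∈ [n], the items indexed in non-increasing profit-density order p_1(u_1)/u_1 ≥ … ≥ p_n(u_n)/u_n, and P_min = max( max_{j∈[n]} p_j(u_j), max { Σ_{j∈[k]} p_j(u_j) : k ∈ {0,…,n}, Σ_{j∈[k]} u_j ≤ Ω } ), which satisfies P_min > 0. Let 0 < ε < 1 and K = ε·P_min/n. For f ∈ [n] define p̂_f(Δ) = p_f(min(Δ, u_f)) for Δ ≥ 0, and set p̂_{n+1}(Δ) = 0 for Δ ≥ 0. Then max { K·Σ_{j∈J} ⌊p_j(u_j)/K⌋ + p̂_f(Ω − Σ_{j∈J} u_j) : f ∈ [n] ∪ {n+1}, J ⊆ [n] \ {f}, Σ_{j∈J} u_j ≤ Ω } ≥ (1 − ε)·P*. (This is the approximation guarantee of the scaling-and-rounding FPTAS.) -/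

import Mathlib

/-!
The objective is a separable convex function, so over the knapsack polytope it attains its
maximum at a point with at most one fractional coordinate: two fractional coordinates can be
shifted against each other in both directions until one of them hits a bound, and one of the two
endpoints is again optimal. As `γ_j ≤ 0`, coordinates at `0` earn nothing, so at such a point
`P*` is the profit of the saturated items `J` plus that of the fractional item `f`, which `p̂_f`
dominates on the residual capacity. Rounding loses less than `K` per item of `J`, in total at
most `n K = ε P_min ≤ ε P*`.
-/

open Finset

section KnapsackPolytope

variable {ι : Type*} [Fintype ι]

def knapsackPolytope (u : ι → ℝ) (Ω : ℝ) : Set (ι → ℝ) :=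
  {x | (∀ j, 0 ≤ x j ∧ x j ≤ u j) ∧ ∑ j, x j ≤ Ω}

noncomputable def fractionalIndices (u x : ι → ℝ) : Finset ι :=
  univ.filter fun j => 0 < x j ∧ x j < u j

noncomputable def saturatedIndices (u x : ι → ℝ) : Finset ι :=
  univ.filter fun j => x j = u j

variable {u : ι → ℝ} {Ω : ℝ}

lemma mem_fractionalIndices {x : ι → ℝ} {j : ι} :
    j ∈ fractionalIndices u x ↔ 0 < x j ∧ x j < u j := by
  simp [fractionalIndices]

section Shift

variable [DecidableEq ι]

lemma exists_shift_fractionalIndices_ssubset {x : ι → ℝ} (hx : x ∈ knapsackPolytope u Ω)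
    {i j : ι} (hij : i ≠ j) (hi : i ∈ fractionalIndices u x) (hj : j ∈ fractionalIndices u x) :
    ∃ t : ℝ, 0 < t ∧ x + t • (Pi.single i 1 - Pi.single j 1) ∈ knapsackPolytope u Ω ∧
      fractionalIndices u (x + t • (Pi.single i 1 - Pi.single j 1)) ⊂ fractionalIndices u x := by
  rw [mem_fractionalIndices] at hi hj
  set t := min (u i - x i) (x j)
  set y := x + t • (Pi.single i 1 - Pi.single j 1 : ι → ℝ)
  have hyi : y i = x i + t := by simp [y, hij]
  have hyj : y j = x j - t := by simp [y, hij.symm, sub_eq_add_neg]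
  have hy : ∀ m, m ≠ i → m ≠ j → y m = x m := fun m hmi hmj => by simp [y, hmi, hmj]
  have ht₁ : t ≤ u i - x i := min_le_left _ _
  have ht₂ : t ≤ x j := min_le_right _ _
  have ht₀ : 0 < t := lt_min (by linarith) hj.1
  refine ⟨t, ht₀, ?_⟩
  change y ∈ knapsackPolytope u Ω ∧ fractionalIndices u y ⊂ fractionalIndices u x
  refine ⟨⟨fun m => ?_, ?_⟩, ?_⟩
  · by_cases hmi : m = i
    · rw [hmi, hyi]; constructor <;> linarith
    by_cases hmj : m = j
    · rw [hmj, hyj]; constructor <;> linarith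
    rw [hy m hmi hmj]; exact hx.1 m
  · have : ∑ m, y m = ∑ m, x m := by
      simp [y, sum_add_distrib, ← mul_sum, sum_sub_distrib]
    exact this.le.trans hx.2
  · have hsub : fractionalIndices u y ⊆ fractionalIndices u x := by
      intro m hm
      rw [mem_fractionalIndices] at hm ⊢
      by_cases hmi : m = i
      · exact hmi ▸ hi
      by_cases hmj : m = j
      · exact hmj ▸ hj
      rwa [hy m hmi hmj] at hm
    rw [ssubset_iff_of_subset hsub]
    rcases min_choice (u i - x i) (x j) with h | h
    · exact ⟨i, mem_fractionalIndices.2 hi, fun hm => by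
        rw [mem_fractionalIndices, hyi] at hm; linarith [hm.2]⟩
    · exact ⟨j, mem_fractionalIndices.2 hj, fun hm => by
        rw [mem_fractionalIndices, hyj] at hm; linarith [hm.1]⟩

lemma exists_segment_fractionalIndices_ssubset {x : ι → ℝ} (hx : x ∈ knapsackPolytope u Ω)
    {i j : ι} (hij : i ≠ j) (hi : i ∈ fractionalIndices u x) (hj : j ∈ fractionalIndices u x) :
    ∃ y ∈ knapsackPolytope u Ω, ∃ z ∈ knapsackPolytope u Ω, x ∈ segment ℝ y z ∧
      fractionalIndices u y ⊂ fractionalIndices u x ∧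
      fractionalIndices u z ⊂ fractionalIndices u x := by
  obtain ⟨a, ha, hy, hyx⟩ := exists_shift_fractionalIndices_ssubset hx hij.symm hj hi
  obtain ⟨b, hb, hz, hzx⟩ := exists_shift_fractionalIndices_ssubset hx hij hi hj
  refine ⟨_, hy, _, hz, ⟨b / (a + b), a / (a + b), by positivity, by positivity,
    by field_simp; ring, ?_⟩, hyx, hzx⟩
  ext m
  simp only [Pi.add_apply, Pi.smul_apply, Pi.sub_apply, smul_eq_mul]
  field_simp
  ring

end Shift

theorem exists_maximizer_card_fractionalIndices_le_one {F : (ι → ℝ) → ℝ}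
    (hF : ConvexOn ℝ Set.univ F) {P : ℝ} (hP : IsGreatest (F '' knapsackPolytope u Ω) P) :
    ∃ x ∈ knapsackPolytope u Ω, F x = P ∧ #(fractionalIndices u x) ≤ 1 := by
  classical
  obtain ⟨x₀, hx₀, hFx₀⟩ := hP.1
  obtain ⟨x, ⟨hx, hFx⟩, hmin⟩ :=
    (InvImage.wf (fun x => #(fractionalIndices u x)) wellFounded_lt).has_min
      {x | x ∈ knapsackPolytope u Ω ∧ F x = P} ⟨x₀, hx₀, hFx₀⟩
  refine ⟨x, hx, hFx, not_lt.1 fun hcard => ?_⟩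
  obtain ⟨i, hi, j, hj, hij⟩ := one_lt_card.1 hcard
  obtain ⟨y, hy, z, hz, hxyz, hyx, hzx⟩ := exists_segment_fractionalIndices_ssubset hx hij hi hj
  have hFy : F y ≤ P := hP.2 ⟨y, hy, rfl⟩
  have hFz : F z ≤ P := hP.2 ⟨z, hz, rfl⟩
  have := hF.le_on_segment trivial trivial hxyz
  rcases le_max_iff.1 (hFx ▸ this) with h | h
  · exact hmin y ⟨hy, le_antisymm hFy h⟩ (card_lt_card hyx)
  · exact hmin z ⟨hz, le_antisymm hFz h⟩ (card_lt_card hzx)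

end KnapsackPolytope

section TwoPieceProfit

variable {ι : Type*} [Fintype ι] (γ β : ι → ℝ) {u : ι → ℝ} {Ω : ℝ}

lemma convexOn_max_affine_zero (c d : ℝ) : ConvexOn ℝ Set.univ fun t : ℝ => max (c + d * t) 0 :=
  (show ConvexOn ℝ Set.univ fun t : ℝ => c + d * t from
    ⟨convex_univ, fun x _ y _ a b _ _ hab => le_of_eq (by
      simp only [smul_eq_mul]; linear_combination c * hab.symm)⟩).sup
    (convexOn_const 0 convex_univ)

lemma convexOn_sum_apply {g : ι → ℝ → ℝ} (hg : ∀ j, ConvexOn ℝ Set.univ (g j)) :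
    ConvexOn ℝ Set.univ fun x : ι → ℝ => ∑ j, g j (x j) :=
  ⟨convex_univ, fun x _ y _ a b ha hb hab => by
    simp only [smul_eq_mul, mul_sum, ← sum_add_distrib, Pi.add_apply, Pi.smul_apply]
    exact sum_le_sum fun j _ => (hg j).2 trivial trivial ha hb hab⟩

lemma sum_le_of_isGreatest (hu : ∀ j, 0 ≤ u j) {P : ℝ}
    (hP : IsGreatest ((fun x : ι → ℝ => ∑ j, max (γ j + β j * x j) 0) '' knapsackPolytope u Ω) P)
    {S : Finset ι} (hS : ∑ j ∈ S, u j ≤ Ω) :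
    ∑ j ∈ S, (γ j + β j * u j) ≤ P := by
  classical
  set x : ι → ℝ := fun j => if j ∈ S then u j else 0
  have hx : x ∈ knapsackPolytope u Ω := by
    refine ⟨fun j => ?_, by simpa [x, sum_ite_mem] using hS⟩
    by_cases hj : j ∈ S <;> simp [x, hj, hu j]
  calc ∑ j ∈ S, (γ j + β j * u j) ≤ ∑ j ∈ S, max (γ j + β j * x j) 0 :=
        sum_le_sum fun j hj => by simp [x, hj]
    _ ≤ ∑ j, max (γ j + β j * x j) 0 :=
        sum_le_sum_of_subset_of_nonneg (subset_univ S) fun j _ _ => le_max_right _ _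
    _ ≤ P := hP.2 ⟨x, hx, rfl⟩

lemma sum_max_eq_sum_saturated_add_sum_fractional (hγ : ∀ j, γ j ≤ 0)
    (hpos : ∀ j, 0 ≤ γ j + β j * u j) {x : ι → ℝ} (hx : ∀ j, 0 ≤ x j ∧ x j ≤ u j) :
    ∑ j, max (γ j + β j * x j) 0 = ∑ j ∈ saturatedIndices u x, (γ j + β j * u j) +
      ∑ j ∈ fractionalIndices u x, max (γ j + β j * x j) 0 := by
  rw [← sum_filter_add_sum_filter_not univ (fun j => x j = u j)]
  congr 1
  · exact sum_congr rfl fun j hj => by rw [(mem_filter.1 hj).2, max_eq_left (hpos j)]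
  · refine (sum_subset (fun j hj => ?_) fun j hj hjf => ?_).symm
    · simp only [mem_fractionalIndices, mem_filter] at hj ⊢
      exact ⟨mem_univ j, hj.2.ne⟩
    · have hx0 : x j = 0 := by
        simp only [mem_fractionalIndices, mem_filter] at hj hjf
        by_contra h
        exact hjf ⟨lt_of_le_of_ne (hx j).1 (Ne.symm h), lt_of_le_of_ne (hx j).2 hj.2⟩
      simp [hx0, hγ j]

lemma sum_saturated_add_sum_fractional_le {x : ι → ℝ} (hx : x ∈ knapsackPolytope u Ω) :
    ∑ j ∈ saturatedIndices u x, u j + ∑ j ∈ fractionalIndices u x, x j ≤ Ω := by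
  have hdisj : Disjoint (saturatedIndices u x) (fractionalIndices u x) :=
    disjoint_filter.2 fun j _ hsat hfrac => hfrac.2.ne hsat
  calc ∑ j ∈ saturatedIndices u x, u j + ∑ j ∈ fractionalIndices u x, x j
      = ∑ j ∈ (saturatedIndices u x).disjUnion (fractionalIndices u x) hdisj, x j := by
        rw [sum_disjUnion]
        congr 1
        exact sum_congr rfl fun j hj => ((mem_filter.1 hj).2).symm
    _ ≤ ∑ j, x j := sum_le_sum_of_subset_of_nonneg (subset_univ _) fun j _ _ => (hx.1 j).1
    _ ≤ Ω := hx.2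

lemma exists_candidate_ge_of_card_fractionalIndices_le_one (hβ : ∀ j, 0 ≤ β j) (hγ : ∀ j, γ j ≤ 0)
    (hpos : ∀ j, 0 ≤ γ j + β j * u j) {phat : Option ι → ℝ → ℝ}
    (hphatnone : ∀ Δ : ℝ, 0 ≤ Δ → phat none Δ = 0)
    (hphatsome : ∀ (f : ι) (Δ : ℝ), 0 ≤ Δ →
      phat (some f) Δ = max (γ f + β f * min Δ (u f)) 0)
    {x : ι → ℝ} (hx : x ∈ knapsackPolytope u Ω) (hfrac : #(fractionalIndices u x) ≤ 1) :
    ∃ (f : Option ι) (J : Finset ι), (∀ j ∈ J, some j ≠ f) ∧ ∑ j ∈ J, u j ≤ Ω ∧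
      ∑ j, max (γ j + β j * x j) 0 ≤
        ∑ j ∈ J, (γ j + β j * u j) + phat f (Ω - ∑ j ∈ J, u j) := by
  rw [sum_max_eq_sum_saturated_add_sum_fractional γ β hγ hpos hx.1]
  have hcap := sum_saturated_add_sum_fractional_le hx
  rcases (fractionalIndices u x).eq_empty_or_nonempty with hempty | hne
  · rw [hempty, sum_empty] at hcap ⊢
    refine ⟨none, saturatedIndices u x, by simp, by linarith, ?_⟩
    rw [hphatnone _ (by linarith)]
  · obtain ⟨f, hf⟩ := card_eq_one.1 (le_antisymm hfrac hne.card_pos)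
    have hfx := mem_fractionalIndices.1 (hf ▸ mem_singleton_self f)
    rw [hf, sum_singleton] at hcap ⊢
    refine ⟨some f, saturatedIndices u x, fun j hj hjf => ?_, by linarith, ?_⟩
    · cases Option.some_injective _ hjf
      exact hfx.2.ne (mem_filter.1 hj).2
    · rw [hphatsome f _ (by linarith)]
      have := hβ f
      gcongr
      exact le_min (by linarith) hfx.2.le

end TwoPieceProfit

lemma sum_sub_card_mul_le_mul_sum_floor {ι : Type*} {K : ℝ} (hK : 0 < K) (s : Finset ι)
    (a : ι → ℝ) : ∑ j ∈ s, a j - #s * K ≤ K * ∑ j ∈ s, (⌊a j / K⌋ : ℝ) := by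
  have hfloor : ∀ j, a j - K ≤ K * ⌊a j / K⌋ := fun j => by
    have := Int.sub_one_lt_floor (a j / K)
    calc a j - K = K * (a j / K - 1) := by field_simp
      _ ≤ K * ⌊a j / K⌋ := by gcongr
  calc ∑ j ∈ s, a j - #s * K = ∑ j ∈ s, (a j - K) := by
        rw [sum_sub_distrib, sum_const, nsmul_eq_mul]
    _ ≤ K * ∑ j ∈ s, (⌊a j / K⌋ : ℝ) := by
        rw [mul_sum]; exact sum_le_sum fun j _ => hfloor j

/-- The excluded item `f ∈ [n] ∪ {n+1}` is encoded by `Option (Fin n)`, with `none` for `n+1`. -/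
theorem stmt_15_general (n : ℕ) (hn : 1 ≤ n) (γ β u : Fin n → ℝ)
    (hβ : ∀ j, 0 < β j) (hu : ∀ j, 0 < u j) (hpos : ∀ j, 0 < γ j + β j * u j)
    (Ω : ℝ)
    (hγ : ∀ j, γ j ≤ 0) (huΩ : ∀ j, u j ≤ Ω)
    (Pstar : ℝ)
    (hPstar : IsGreatest ((fun x : Fin n → ℝ => ∑ j, max (γ j + β j * x j) 0) ''
        {x | (∀ j, 0 ≤ x j ∧ x j ≤ u j) ∧ ∑ j, x j ≤ Ω}) Pstar)
    (PR : ℝ)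
    (hPR : IsGreatest {v : ℝ | ∃ k ≤ n,
        (∑ j ∈ Finset.univ.filter (fun j : Fin n => (j : ℕ) < k), u j ≤ Ω) ∧
        v = ∑ j ∈ Finset.univ.filter (fun j : Fin n => (j : ℕ) < k),
          (γ j + β j * u j)} PR)
    (Pmax : ℝ)
    (hPmax : IsGreatest {v : ℝ | ∃ j : Fin n, v = γ j + β j * u j} Pmax)
    (Pmin : ℝ) (hPmin : Pmin = max Pmax PR) (hPminpos : 0 < Pmin)
    (ε : ℝ) (hε0 : 0 < ε)
    (K : ℝ) (hK : K = ε * Pmin / n)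
    (phat : Option (Fin n) → ℝ → ℝ)
    (hphatnone : ∀ Δ : ℝ, 0 ≤ Δ → phat none Δ = 0)
    (hphatsome : ∀ (f : Fin n) (Δ : ℝ), 0 ≤ Δ →
      phat (some f) Δ = max (γ f + β f * min Δ (u f)) 0) :
    (1 - ε) * Pstar ≤
      sSup {v : ℝ | ∃ (f : Option (Fin n)) (J : Finset (Fin n)),
        (∀ j ∈ J, some j ≠ f) ∧ (∑ j ∈ J, u j ≤ Ω) ∧
        v = K * (∑ j ∈ J, (⌊(γ j + β j * u j) / K⌋ : ℝ)) +
          phat f (Ω - ∑ j ∈ J, u j)} := by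
  have hu₀ : ∀ j, 0 ≤ u j := fun j => (hu j).le
  have hPmin_le : Pmin ≤ Pstar := by
    rw [hPmin]
    refine max_le ?_ ?_
    · obtain ⟨j, rfl⟩ := hPmax.1
      simpa using sum_le_of_isGreatest γ β hu₀ hPstar (S := {j}) (by simpa using huΩ j)
    · obtain ⟨k, -, hk, rfl⟩ := hPR.1
      exact sum_le_of_isGreatest γ β hu₀ hPstar hk
  obtain ⟨x, hx, hxP, hfrac⟩ := exists_maximizer_card_fractionalIndices_le_one
    (convexOn_sum_apply fun j => convexOn_max_affine_zero (γ j) (β j)) hPstar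
  obtain ⟨f, J, hJf, hJ, hle⟩ := exists_candidate_ge_of_card_fractionalIndices_le_one γ β
    (fun j => (hβ j).le) hγ (fun j => (hpos j).le) hphatnone hphatsome hx hfrac
  have hKpos : 0 < K := by rw [hK]; positivity
  have hnK : n * K = ε * Pmin := by rw [hK]; field_simp
  have hround := sum_sub_card_mul_le_mul_sum_floor hKpos J fun j => γ j + β j * u j
  have hcard : (#J : ℝ) ≤ n := by exact_mod_cast (card_le_univ J).trans (Fintype.card_fin n).le
  refine le_trans ?_ (le_csSup ?_ ⟨f, J, hJf, hJ, rfl⟩)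
  · calc (1 - ε) * Pstar ≤ Pstar - n * K := by
          rw [hnK]; linarith [mul_le_mul_of_nonneg_left hPmin_le hε0.le]
      _ ≤ ∑ j ∈ J, (γ j + β j * u j) - #J * K + phat f (Ω - ∑ j ∈ J, u j) := by
          linarith [mul_le_mul_of_nonneg_right hcard hKpos.le]
      _ ≤ K * (∑ j ∈ J, (⌊(γ j + β j * u j) / K⌋ : ℝ)) + phat f (Ω - ∑ j ∈ J, u j) := by
          linarith
  · refine Set.Finite.bddAbove <| (Set.finite_range fun p : Option (Fin n) × Finset (Fin n) =>
      K * (∑ j ∈ p.2, (⌊(γ j + β j * u j) / K⌋ : ℝ)) + phat p.1 (Ω - ∑ j ∈ p.2, u j)).subset ?_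
    rintro v ⟨f, J, -, -, rfl⟩
    exact ⟨(f, J), rfl⟩

/-- Proposition 5 (FPTAS guarantee): the best value obtainable from the scaled
and rounded profits (over a choice of excluded item `f ∈ [n] ∪ {n+1}`, encoded
by `Option (Fin n)` with `none` playing the role of `n+1`, and a feasible fully
selected set `J`) is at least `(1 − ε)·P*`. -/
theorem stmt_15 (n : ℕ) (hn : 1 ≤ n) (γ β u : Fin n → ℝ)
    (hβ : ∀ j, 0 < β j) (hu : ∀ j, 0 < u j) (hpos : ∀ j, 0 < γ j + β j * u j)
    (Ω : ℝ) (hΩ : 0 < Ω)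
    (hγ : ∀ j, γ j ≤ 0) (huΩ : ∀ j, u j ≤ Ω)
    (hdens : ∀ i j : Fin n, i ≤ j →
      (γ j + β j * u j) / u j ≤ (γ i + β i * u i) / u i)
    (Pstar : ℝ)
    (hPstar : IsGreatest ((fun x : Fin n → ℝ => ∑ j, max (γ j + β j * x j) 0) ''
        {x | (∀ j, 0 ≤ x j ∧ x j ≤ u j) ∧ ∑ j, x j ≤ Ω}) Pstar)
    (PR : ℝ)
    (hPR : IsGreatest {v : ℝ | ∃ k ≤ n,
        (∑ j ∈ Finset.univ.filter (fun j : Fin n => (j : ℕ) < k), u j ≤ Ω) ∧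
        v = ∑ j ∈ Finset.univ.filter (fun j : Fin n => (j : ℕ) < k),
          (γ j + β j * u j)} PR)
    (Pmax : ℝ)
    (hPmax : IsGreatest {v : ℝ | ∃ j : Fin n, v = γ j + β j * u j} Pmax)
    (Pmin : ℝ) (hPmin : Pmin = max Pmax PR) (hPminpos : 0 < Pmin)
    (ε : ℝ) (hε0 : 0 < ε) (hε1 : ε < 1)
    (K : ℝ) (hK : K = ε * Pmin / n)
    (phat : Option (Fin n) → ℝ → ℝ)
    (hphatnone : ∀ Δ : ℝ, 0 ≤ Δ → phat none Δ = 0)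
    (hphatsome : ∀ (f : Fin n) (Δ : ℝ), 0 ≤ Δ →
      phat (some f) Δ = max (γ f + β f * min Δ (u f)) 0) :
    (1 - ε) * Pstar ≤
      sSup {v : ℝ | ∃ (f : Option (Fin n)) (J : Finset (Fin n)),
        (∀ j ∈ J, some j ≠ f) ∧ (∑ j ∈ J, u j ≤ Ω) ∧
        v = K * (∑ j ∈ J, (⌊(γ j + β j * u j) / K⌋ : ℝ)) +
          phat f (Ω - ∑ j ∈ J, u j)} :=
  stmt_15_general n hn γ β u hβ hu hpos Ω hγ huΩ Pstar hPstar PR hPR Pmax hPmax Pmin hPmin hPminpos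
    ε hε0 K hK phat hphatnone hphatsome
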